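/- Let S(s,t)=(s+ct, st+ct²/2, g(s)) be an isotropic surface of revolution in Galilean 3-space with unit normal n(s)=(1/√((g'c)²+s²))(0,g'c,s), and let d=(0,λ,0) be an isotropic axis with d_z=0, λ≠0. If g(s)=s²/(2c)+A for a constant A, then ⟨n,d⟩=λ/√2 for all s>0, i.e. the generating curve is an isophote curve with axis d. -/

import Mathlib

/-- The scalar product of (projections of) vectors onto the `yz`-plane; it
agrees with the Galilean scalar product on isotropic vectors. -/
def iprod (x y : ℝ × ℝ × ℝ) : ℝ := x.2.1 * y.2.1 + x.2.2 * y.2.2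

theorem iprod_smul_left (a : ℝ) (x y : ℝ × ℝ × ℝ) : iprod (a • x) y = a * iprod x y := by
  simp only [iprod, Prod.smul_fst, Prod.smul_snd, smul_eq_mul]
  ring

theorem iprod_isotropic_axis (x : ℝ × ℝ × ℝ) (lam : ℝ) : iprod x (0, lam, 0) = x.2.1 * lam := by
  simp [iprod]

/-- For `c = 0` both sides vanish, since `s ^ 2 / 0 = 0` and `s / 0 = 0`. -/
theorem deriv_sq_div_add_const (c A s : ℝ) :
    deriv (fun s : ℝ => s ^ 2 / (2 * c) + A) s = s / c := by
  rw [deriv_add_const, deriv_div_const, deriv_pow_field]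
  norm_num [mul_div_mul_left]

theorem sqrt_sq_add_sq_self {s : ℝ} (hs : 0 ≤ s) : √(s ^ 2 + s ^ 2) = √2 * s := by
  rw [← two_mul, Real.sqrt_mul zero_le_two, Real.sqrt_sq hs]

theorem isotropic_revolution_isophote_dz_zero_general
    (c A lam : ℝ) (hc : 0 < c)
    (g : ℝ → ℝ) (hg : g = fun s => s ^ 2 / (2 * c) + A)
    (n : ℝ → ℝ × ℝ × ℝ)
    (hn : ∀ s, n s = (Real.sqrt ((deriv g s * c) ^ 2 + s ^ 2))⁻¹
        • ((0:ℝ), deriv g s * c, s))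
    (d : ℝ × ℝ × ℝ) (hd : d = ((0:ℝ), lam, (0:ℝ))) :
    ∀ s > 0, iprod (n s) d = lam / Real.sqrt 2 := by
  intro s hs
  have hgc : deriv g s * c = s := by
    rw [hg, deriv_sq_div_add_const, div_mul_cancel₀ s hc.ne']
  rw [hn, hd, hgc, iprod_smul_left, iprod_isotropic_axis, sqrt_sq_add_sq_self hs.le]
  field_simp

/-- For the isotropic surface of revolution `S(s,t) = (s+ct, st+ct²/2, g(s))`
with unit normal `n(s) = (1/√((g'c)²+s²)) • (0, g'c, s)` and isotropic axis
`d = (0,λ,0)` (`d_z = 0`, `λ ≠ 0`): if `g(s) = s²/(2c) + A`, then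
`⟨n,d⟩ = λ/√2` for all `s > 0`, i.e. the generating curve is an isophote
curve with axis `d`. -/
theorem isotropic_revolution_isophote_dz_zero
    (c A lam : ℝ) (hc : 0 < c) (hlam : lam ≠ 0)
    (g : ℝ → ℝ) (hg : g = fun s => s ^ 2 / (2 * c) + A)
    (n : ℝ → ℝ × ℝ × ℝ)
    (hn : ∀ s, n s = (Real.sqrt ((deriv g s * c) ^ 2 + s ^ 2))⁻¹
        • ((0:ℝ), deriv g s * c, s))
    (d : ℝ × ℝ × ℝ) (hd : d = ((0:ℝ), lam, (0:ℝ))) :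
    ∀ s > 0, iprod (n s) d = lam / Real.sqrt 2 :=
  isotropic_revolution_isophote_dz_zero_general c A lam hc g hg n hn d hd
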